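/- arXiv:2412.08768 — 2 statements merged into one kernel-verified Lean document; each statement's English description precedes it below -/
import Mathlib

section
/- Let (a_n) be a convergent series of positive non-increasing terms with partial-subsum sets F_n = { ∑_{i∈A} a_i : A ⊆ {1,…,n} } and remainders r_n. If there is an increasing sequence of indices (n_k) and sets D_k ⊆ F_{n_k} such that consecutive elements of D_k differ by at most r_{n_k} and inf_k (max D_k − min D_k) > 0, then E(a_n) contains a nonempty open interval. -/
/-!
The achievement set of a summable series is compact, being the continuous image of the
Cantor space `ℕ → Bool`. Each `D k` consists of points of it, and since consecutive gaps of
`D k` are at most `r (n k)`, every point of `[min D k, max D k]` lies within `r (n k)` of the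
achievement set. Along a subsequence the minima converge to some `m`, while `r (n k) → 0` and
the stretch stays above `ε`; so every point of `(m, m + ε)` is a limit of points of the closed
achievement set.
-/

open Filter Topology Set

/-- The achievement set (set of all subsums) of a series. -/
noncomputable def achSet (a : ℕ → ℝ) : Set ℝ :=
  {x | ∃ A : Set ℕ, HasSum (A.indicator a) x}

/-- The `n`-th remainder `r n = ∑_{i > n} a i`. -/
noncomputable def rem (a : ℕ → ℝ) (n : ℕ) : ℝ := ∑' j : ℕ, a (n + 1 + j)

theorem Finset.sum_mem_achSet (a : ℕ → ℝ) (A : Finset ℕ) : ∑ i ∈ A, a i ∈ achSet a :=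
  ⟨A, hasSum_subtype_iff_indicator.1 (A.hasSum a)⟩

theorem achSet_eq_range {a : ℕ → ℝ} (hsum : Summable a) :
    achSet a = range fun s : ℕ → Bool => ∑' i, {j | s j}.indicator a i := by
  classical
  ext x
  constructor
  · rintro ⟨A, hA⟩
    exact ⟨fun i => decide (i ∈ A), by simpa using hA.tsum_eq⟩
  · rintro ⟨s, rfl⟩
    exact ⟨{j | s j}, (hsum.indicator _).hasSum⟩

theorem isCompact_achSet {a : ℕ → ℝ} (hsum : Summable a) : IsCompact (achSet a) := by
  rw [achSet_eq_range hsum]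
  refine isCompact_range (continuous_tsum (fun i => ?_) hsum.norm fun i s =>
    norm_indicator_le_norm_self _ _)
  have hcoord : (fun s : ℕ → Bool => {j | s j}.indicator a i) = (fun b => if b then a i else 0) ∘
      fun s => s i := by
    ext s
    by_cases h : s i <;> simp [h]
  rw [hcoord]
  exact continuous_of_discreteTopology.comp (continuous_apply i)

theorem rem_nonneg {a : ℕ → ℝ} (ha : ∀ i, 0 ≤ a i) (n : ℕ) : 0 ≤ rem a n :=
  tsum_nonneg fun _ => ha _

theorem tendsto_rem_atTop (a : ℕ → ℝ) : Tendsto (rem a) atTop (𝓝 0) := by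
  have h : rem a = (fun n => ∑' k, a (k + n)) ∘ (· + 1) := by
    ext n
    simp only [rem, Function.comp_apply]
    exact tsum_congr fun j => by rw [add_comm]
  rw [h]
  exact (tendsto_sum_nat_add a).comp (tendsto_add_atTop_nat 1)

/-- The witness `z` is the largest element of `E` below `x`. -/
theorem Finset.exists_le_le_add_of_gaps_le {α : Type*} [AddCommGroup α] [LinearOrder α]
    [IsOrderedAddMonoid α] {E : Finset α} (hne : E.Nonempty) {r : α} (hr : 0 ≤ r)
    (hgap : ∀ x ∈ E, (∃ y ∈ E, x < y) → ∃ y ∈ E, x < y ∧ y ≤ x + r)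
    {x : α} (hmin : E.min' hne ≤ x) (hmax : x ≤ E.max' hne) :
    ∃ z ∈ E, z ≤ x ∧ x ≤ z + r := by
  have hbelow : (E.filter (· ≤ x)).Nonempty :=
    ⟨E.min' hne, Finset.mem_filter.2 ⟨E.min'_mem hne, hmin⟩⟩
  set z := (E.filter (· ≤ x)).max' hbelow
  obtain ⟨hzE, hzx⟩ := Finset.mem_filter.1 ((E.filter (· ≤ x)).max'_mem hbelow)
  refine ⟨z, hzE, hzx, ?_⟩
  rcases (E.le_max' z hzE).eq_or_lt with hz | hz
  · rw [← hz] at hmax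
    exact (le_antisymm hmax hzx).le.trans (le_add_of_nonneg_right hr)
  obtain ⟨y, hyE, hzy, hyz⟩ := hgap z hzE ⟨_, E.max'_mem hne, hz⟩
  have hxy : x < y := lt_of_not_ge fun hyx =>
    hzy.not_ge ((E.filter (· ≤ x)).le_max' y (Finset.mem_filter.2 ⟨hyE, hyx⟩))
  exact hxy.le.trans hyz

theorem Ioo_subset_closure_of_gaps_le {ι : Type*} {l : Filter ι} [l.NeBot] {S : Set ℝ}
    (E : ι → Finset ℝ) (hne : ∀ k, (E k).Nonempty) (hES : ∀ k, ↑(E k) ⊆ S)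
    {r : ι → ℝ} (hr0 : ∀ k, 0 ≤ r k) (hr : Tendsto r l (𝓝 0))
    (hgap : ∀ k, ∀ x ∈ E k, (∃ y ∈ E k, x < y) → ∃ y ∈ E k, x < y ∧ y ≤ x + r k)
    {m ε : ℝ} (hmin : Tendsto (fun k => (E k).min' (hne k)) l (𝓝 m))
    (hstretch : ∀ k, ε ≤ (E k).max' (hne k) - (E k).min' (hne k)) :
    Ioo m (m + ε) ⊆ closure S := by
  rintro x ⟨hmx, hxm⟩
  refine Metric.mem_closure_iff.2 fun δ hδ => ?_
  have hbelow := hmin.eventually_lt_const hmx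
  have habove := hmin.eventually_const_lt (sub_lt_iff_lt_add.2 hxm)
  have hsmall := hr.eventually_lt_const hδ
  obtain ⟨k, hminx, hxmin, hrδ⟩ := (hbelow.and (habove.and hsmall)).exists
  obtain ⟨z, hzE, hzx, hxz⟩ := Finset.exists_le_le_add_of_gaps_le (hne k) (hr0 k) (hgap k)
    hminx.le (by linarith [hstretch k])
  exact ⟨z, hES k hzE, by rw [Real.dist_eq, abs_of_nonneg (sub_nonneg.2 hzx)]; linarith⟩

theorem interval_criterion_general (a : ℕ → ℝ) (hpos : ∀ i, 0 < a i)
    (hsum : Summable a) (nk : ℕ → ℕ) (hnk : StrictMono nk)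
    (D : ℕ → Finset ℝ) (hne : ∀ k, (D k).Nonempty)
    (hsub : ∀ k, ∀ x ∈ D k, ∃ A ⊆ Finset.range (nk k), x = ∑ i ∈ A, a i)
    (hclose : ∀ k, ∀ x ∈ D k, (∃ y ∈ D k, x < y) →
      ∃ y ∈ D k, x < y ∧ y ≤ x + rem a (nk k))
    (hstretch : ∃ ε > (0 : ℝ), ∀ k, ε ≤ (D k).max' (hne k) - (D k).min' (hne k)) :
    ∃ x y : ℝ, x < y ∧ Set.Ioo x y ⊆ achSet a := by
  obtain ⟨ε, hε, hstr⟩ := hstretch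
  have hDach : ∀ k, ↑(D k) ⊆ achSet a := fun k x hx => by
    obtain ⟨A, -, rfl⟩ := hsub k x hx
    exact A.sum_mem_achSet a
  obtain ⟨m, -, φ, hφ, hmin⟩ :=
    (isCompact_achSet hsum).tendsto_subseq fun k => hDach k ((D k).min'_mem (hne k))
  refine ⟨m, m + ε, lt_add_of_pos_right m hε, ?_⟩
  rw [← (isCompact_achSet hsum).isClosed.closure_eq]
  exact Ioo_subset_closure_of_gaps_le (fun k => D (φ k)) (fun k => hne (φ k))
    (fun k => hDach (φ k)) (fun k => rem_nonneg (fun i => (hpos i).le) _)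
    ((tendsto_rem_atTop a).comp ((hnk.comp hφ).tendsto_atTop)) (fun k => hclose (φ k)) hmin
    fun k => hstr (φ k)

/-- Interval criterion: if along an increasing sequence of indices `n k` there are
sets `D k` of subsums of the first `n k` terms whose consecutive elements differ by
at most `r (n k)` and whose stretch is bounded below by a positive constant, then the
achievement set contains a nonempty open interval. -/
theorem interval_criterion (a : ℕ → ℝ) (hpos : ∀ i, 0 < a i) (hmono : Antitone a)
    (hsum : Summable a) (nk : ℕ → ℕ) (hnk : StrictMono nk)
    (D : ℕ → Finset ℝ) (hne : ∀ k, (D k).Nonempty)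
    (hsub : ∀ k, ∀ x ∈ D k, ∃ A ⊆ Finset.range (nk k), x = ∑ i ∈ A, a i)
    (hclose : ∀ k, ∀ x ∈ D k, (∃ y ∈ D k, x < y) →
      ∃ y ∈ D k, x < y ∧ y ≤ x + rem a (nk k))
    (hstretch : ∃ ε > (0 : ℝ), ∀ k, ε ≤ (D k).max' (hne k) - (D k).min' (hne k)) :
    ∃ x y : ℝ, x < y ∧ Set.Ioo x y ⊆ achSet a :=
  interval_criterion_general a hpos hsum nk hnk D hne hsub hclose hstretch
end

section
/- In the Marchwicki–Miska construction, define C_k := { p q_k : 2^{n_k} ≤ p ≤ 2^{n_k+2} − 1 } and D_1 := C_1, D_{k+1} := D_k + C_{k+1} (Minkowski sum). Then for every k: (α) every element of D_k is a subsum of a_1,…,a_{N_k}; (β) any two consecutive elements of D_k differ by at most q_k; (γ) min D_k = ∑_{i=1}^k 2^{n_i} q_i and max D_k = ∑_{i=1}^k (2^{n_i+2} − 1) q_i. -/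
/-!
The terms of the block `b^n_1, …, b^n_{n+2}` are `2^{n+1}, 2^n + 1, 2^n, …, 2^1`: the powers
`2^1, …, 2^{n+1}` give every even number below `2^{n+2}` by binary expansion, and adding
`2^n + 1` gives the odd ones from `2^n + 1` on, so every `p q_k ∈ C_k` is a subsum of the
`k`-th block; subsums of disjoint blocks add up, which gives (α). Minima and maxima of a
Minkowski sum add up, which gives (γ). For (β), write `x = d + p q_{k+1}` with `d ∈ D_k`: if `p`
is not the top of its range, step to `p + 1`; otherwise step from `d` to the next element `d'`
of `D_k`, and since `d' - d ≤ q_k = 3 · 2^{n_{k+1}} q_{k+1}` is at most the length of the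
progression `C_{k+1}` plus one step, some `d' + p' q_{k+1}` lies in `(x, x + q_{k+1}]`.
-/

open Pointwise

/-- The terms of the basic group: `b^n_1 = 2^(n+1)`, `b^n_2 = 2^n + 1`,
`b^n_j = 2^(n+3-j)` for `3 ≤ j ≤ n+2`. -/
def mmB (n j : ℕ) : ℕ :=
  if j = 1 then 2 ^ (n + 1) else if j = 2 then 2 ^ n + 1 else 2 ^ (n + 3 - j)

open Finset

section Subsums

variable {ι κ M N : Type*} [AddCommMonoid M] [AddCommMonoid N]

def subsums (a : ι → M) (s : Finset ι) : Set M :=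
  {x | ∃ A ⊆ s, x = ∑ i ∈ A, a i}

theorem zero_mem_subsums (a : ι → M) (s : Finset ι) : 0 ∈ subsums a s :=
  ⟨∅, empty_subset s, sum_empty.symm⟩

theorem apply_mem_subsums_singleton (a : ι → M) (i : ι) : a i ∈ subsums a {i} :=
  ⟨{i}, Subset.rfl, (sum_singleton a i).symm⟩

theorem subsums_mono {a : ι → M} {s t : Finset ι} (hst : s ⊆ t) : subsums a s ⊆ subsums a t :=
  fun _ ⟨A, hA, hx⟩ ↦ ⟨A, hA.trans hst, hx⟩

theorem add_subsums_subset_union [DecidableEq ι] {a : ι → M} {s t : Finset ι}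
    (hst : Disjoint s t) : subsums a s + subsums a t ⊆ subsums a (s ∪ t) := by
  rintro _ ⟨x, ⟨A, hA, rfl⟩, y, ⟨B, hB, rfl⟩, rfl⟩
  exact ⟨A ∪ B, union_subset_union hA hB,
    (sum_union (hst.mono hA hB)).symm⟩

theorem map_mem_subsums {a : ι → M} {b : κ → N} {s : Finset ι} {t : Finset κ} (f : M →+ N)
    {e : ι → κ} (he : Set.InjOn e s) (hst : Set.MapsTo e s t) (hab : ∀ i ∈ s, b (e i) = f (a i))
    {x : M} (hx : x ∈ subsums a s) : f x ∈ subsums b t := by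
  classical
  obtain ⟨A, hA, rfl⟩ := hx
  refine ⟨A.image e, fun j hj ↦ ?_, ?_⟩
  · obtain ⟨i, hi, rfl⟩ := mem_image.1 hj
    exact hst (hA hi)
  · rw [map_sum, sum_image (he.mono (by simpa using hA))]
    exact sum_congr rfl fun i hi ↦ (hab i (hA hi)).symm

end Subsums

theorem mem_subsums_two_pow {m k : ℕ} (hm : m < 2 ^ k) : m ∈ subsums (2 ^ ·) (range k) := by
  refine ⟨m.bitIndices.toFinset, fun i hi ↦ ?_, (sum_toFinset_bitIndices_two_pow m).symm⟩
  have : 2 ^ i < 2 ^ k := (Nat.two_pow_le_of_mem_bitIndices (List.mem_toFinset.1 hi)).trans_lt hm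
  exact mem_range.2 ((Nat.pow_lt_pow_iff_right (by norm_num)).1 this)

theorem two_mul_mem_subsums_mmB {n s : ℕ} (hs : s < 2 ^ (n + 1)) :
    2 * s ∈ subsums (mmB n) ((Icc 1 (n + 2)).erase 2) := by
  refine map_mem_subsums (AddMonoidHom.mulLeft 2) (e := fun i ↦ if i = n then 1 else n + 2 - i)
    ?_ ?_ ?_ (mem_subsums_two_pow hs)
  · intro i hi j hj hij
    simp only [coe_range, Set.mem_Iio] at hi hj
    dsimp only at hij
    split_ifs at hij <;> omega
  · intro i hi
    simp only [coe_range, Set.mem_Iio] at hi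
    simp only [mem_coe, mem_erase, mem_Icc]
    split_ifs <;> omega
  · intro i hi
    simp only [mem_range] at hi
    simp only [AddMonoidHom.coe_mulLeft, mmB]
    split_ifs <;> first | omega | (rw [← pow_succ']; congr 1; omega)

theorem mem_subsums_mmB {n p : ℕ} (hn : 1 ≤ n) (hp : p ∈ Icc (2 ^ n) (2 ^ (n + 2) - 1)) :
    p ∈ subsums (mmB n) (Icc 1 (n + 2)) := by
  have h0 : 0 < 2 ^ n := by positivity
  have h2 : 2 ^ (n + 1) = 2 * 2 ^ n := by ring
  have h4 : 2 ^ (n + 2) = 4 * 2 ^ n := by ring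
  rw [mem_Icc] at hp
  rcases Nat.even_or_odd' p with ⟨s, rfl | rfl⟩
  · exact subsums_mono (erase_subset 2 _) (two_mul_mem_subsums_mmB (by omega))
  · have h2n : 2 ^ n = 2 * 2 ^ (n - 1) := by rw [← pow_succ']; congr 1; omega
    obtain ⟨t, rfl⟩ : ∃ t, s = 2 ^ (n - 1) + t := ⟨s - 2 ^ (n - 1), by omega⟩
    have hsum : 2 * (2 ^ (n - 1) + t) + 1 = mmB n 2 + 2 * t := by simp [mmB]; omega
    rw [hsum, ← insert_erase (show 2 ∈ Icc 1 (n + 2) by simp), ← singleton_union]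
    exact add_subsums_subset_union (disjoint_singleton_left.2 (notMem_erase 2 _))
      (Set.add_mem_add (apply_mem_subsums_singleton _ _) (two_mul_mem_subsums_mmB (by omega)))

noncomputable def progression (l h : ℕ) (r : ℝ) : Finset ℝ :=
  (Icc l h).image fun p : ℕ ↦ (p : ℝ) * r

theorem mem_progression {l h : ℕ} {r x : ℝ} :
    x ∈ progression l h r ↔ ∃ p ∈ Icc l h, (p : ℝ) * r = x :=
  mem_image

theorem progression_subset_subsums_mmB {n M : ℕ} {r : ℝ} {a : ℕ → ℝ} (hn : 1 ≤ n)
    (ha : ∀ i, 1 ≤ i → i ≤ n + 2 → a (M + i) = (mmB n i : ℝ) * r) :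
    ↑(progression (2 ^ n) (2 ^ (n + 2) - 1) r) ⊆ subsums a (Icc (M + 1) (M + (n + 2))) := by
  intro x hx
  obtain ⟨p, hp, rfl⟩ := mem_progression.1 hx
  refine map_mem_subsums ((AddMonoidHom.mulRight r).comp (Nat.castAddMonoidHom ℝ))
    (e := (M + ·)) (fun i _ j _ hij ↦ by simpa using hij) (fun i hi ↦ ?_) (fun i hi ↦ ?_)
    (mem_subsums_mmB hn hp)
  · simp only [mem_coe, mem_Icc] at hi ⊢
    omega
  · rw [mem_Icc] at hi
    simpa using ha i hi.1 hi.2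

theorem isLeast_progression {l h : ℕ} {r : ℝ} (hlh : l ≤ h) (hr : 0 ≤ r) :
    IsLeast (progression l h r : Set ℝ) (l * r) := by
  refine ⟨mem_progression.2 ⟨l, mem_Icc.2 ⟨le_rfl, hlh⟩, rfl⟩, ?_⟩
  rintro _ hx
  obtain ⟨p, hp, rfl⟩ := mem_progression.1 hx
  exact mul_le_mul_of_nonneg_right (Nat.cast_le.2 (mem_Icc.1 hp).1) hr

theorem isGreatest_progression {l h : ℕ} {r : ℝ} (hlh : l ≤ h) (hr : 0 ≤ r) :
    IsGreatest (progression l h r : Set ℝ) (h * r) := by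
  refine ⟨mem_progression.2 ⟨h, mem_Icc.2 ⟨hlh, le_rfl⟩, rfl⟩, ?_⟩
  rintro _ hx
  obtain ⟨p, hp, rfl⟩ := mem_progression.1 hx
  exact mul_le_mul_of_nonneg_right (Nat.cast_le.2 (mem_Icc.1 hp).2) hr

theorem exists_add_mul_mem_Ioc {l h : ℕ} {r c x : ℝ} (hr : 0 < r)
    (hl : c + l * r ≤ x + r) (hh : x < c + h * r) :
    ∃ m ∈ Icc l h, x < c + m * r ∧ c + m * r ≤ x + r := by
  classical
  have hex : ∃ m : ℕ, x < c + m * r := ⟨h, hh⟩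
  obtain hle | hlt := le_or_gt (Nat.find hex) l
  · have hx : x < c + l * r := (Nat.find_spec hex).trans_le (by gcongr)
    have hlh : (l : ℝ) < h + 1 := lt_of_mul_lt_mul_right (by linarith) hr.le
    exact ⟨l, mem_Icc.2 ⟨le_rfl, Nat.lt_succ_iff.1 (by exact_mod_cast hlh)⟩, hx, hl⟩
  · set m := Nat.find hex
    have hprev : c + ((m - 1 : ℕ) : ℝ) * r ≤ x := not_lt.1 (Nat.find_min hex (by omega))
    rw [Nat.cast_pred (by omega)] at hprev
    exact ⟨m, mem_Icc.2 ⟨hlt.le, Nat.find_min' hex hh⟩, Nat.find_spec hex, by linarith⟩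

def HasGapsAtMost (S : Finset ℝ) (δ : ℝ) : Prop :=
  ∀ x ∈ S, (∃ y ∈ S, x < y) → ∃ y ∈ S, x < y ∧ y ≤ x + δ

theorem hasGapsAtMost_zero (δ : ℝ) : HasGapsAtMost 0 δ := by
  rintro x hx ⟨y, hy, hxy⟩
  rw [mem_zero] at hx hy
  subst hx hy
  exact absurd hxy (lt_irrefl 0)

theorem HasGapsAtMost.add_progression {S : Finset ℝ} {δ r : ℝ} {l h : ℕ}
    (hS : HasGapsAtMost S δ) (hr : 0 < r) (hδ : δ + l * r ≤ (h + 1) * r) :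
    HasGapsAtMost (S + progression l h r) r := by
  rintro _ hx ⟨_, hy, hxy⟩
  obtain ⟨d, hd, _, hxP, rfl⟩ := mem_add.1 hx
  obtain ⟨p, hp, rfl⟩ := mem_progression.1 hxP
  obtain ⟨e, he, _, hyP, rfl⟩ := mem_add.1 hy
  obtain ⟨p', hp', rfl⟩ := mem_progression.1 hyP
  rw [mem_Icc] at hp hp'
  obtain ⟨c, hc, hcl, hch⟩ : ∃ c ∈ S, c + l * r ≤ d + p * r + r ∧ d + p * r < c + h * r := by
    obtain hph | rfl := hp.2.lt_or_eq
    · refine ⟨d, hd, ?_, ?_⟩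
      · have : (l : ℝ) ≤ p := by exact_mod_cast hp.1
        nlinarith
      · have : (p : ℝ) < h := by exact_mod_cast hph
        nlinarith
    · have hde : d < e := by
        have : (p' : ℝ) ≤ p := by exact_mod_cast hp'.2
        nlinarith
      obtain ⟨c, hc, hdc, hcd⟩ := hS d hd ⟨e, he, hde⟩
      exact ⟨c, hc, by linarith, by linarith⟩
  obtain ⟨m, hm, hxm, hmx⟩ := exists_add_mul_mem_Ioc hr hcl hch
  exact ⟨c + m * r, add_mem_add hc (mem_progression.2 ⟨m, hm, rfl⟩), hxm, hmx⟩

theorem IsLeast.add {M : Type*} [Add M] [Preorder M] [AddLeftMono M] [AddRightMono M]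
    {s t : Set M} {a b : M} (ha : IsLeast s a) (hb : IsLeast t b) : IsLeast (s + t) (a + b) :=
  ⟨Set.add_mem_add ha.1 hb.1, add_mem_lowerBounds_add ha.2 hb.2⟩

theorem IsGreatest.add {M : Type*} [Add M] [Preorder M] [AddLeftMono M] [AddRightMono M]
    {s t : Set M} {a b : M} (ha : IsGreatest s a) (hb : IsGreatest t b) :
    IsGreatest (s + t) (a + b) :=
  ⟨Set.add_mem_add ha.1 hb.1, add_mem_upperBounds_add ha.2 hb.2⟩

/-- Properties (α), (β), (γ) of the paper for `S = D_k`, `M = N_k`, `δ = q_k`. -/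
def MMProperties (a : ℕ → ℝ) (S : Finset ℝ) (M : ℕ) (δ lo hi : ℝ) : Prop :=
  ↑S ⊆ subsums a (Icc 1 M) ∧ HasGapsAtMost S δ ∧ IsLeast (S : Set ℝ) lo ∧
    IsGreatest (S : Set ℝ) hi

theorem mmProperties_zero (a : ℕ → ℝ) (M : ℕ) : MMProperties a 0 M 0 0 0 := by
  refine ⟨?_, hasGapsAtMost_zero 0, ?_, ?_⟩ <;> rw [coe_zero]
  · exact Set.singleton_subset_iff.2 (zero_mem_subsums a _)
  · exact isLeast_singleton
  · exact isGreatest_singleton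

theorem MMProperties.add_progression {a : ℕ → ℝ} {S : Finset ℝ} {M M' l h : ℕ} {δ lo hi r : ℝ}
    (hS : MMProperties a S M δ lo hi) (hMM' : M ≤ M')
    (hblock : ↑(progression l h r) ⊆ subsums a (Icc (M + 1) M'))
    (hlh : l ≤ h) (hr : 0 < r) (hδ : δ + l * r ≤ (h + 1) * r) :
    MMProperties a (S + progression l h r) M' r (lo + l * r) (hi + h * r) := by
  obtain ⟨hα, hβ, hmin, hmax⟩ := hS
  refine ⟨?_, hβ.add_progression hr hδ, ?_, ?_⟩ <;> rw [coe_add]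
  · have hdisj : Disjoint (Icc 1 M) (Icc (M + 1) M') :=
      disjoint_left.2 fun i hi hi' ↦ by simp only [mem_Icc] at hi hi'; omega
    refine (Set.add_subset_add hα hblock).trans ((add_subsums_subset_union hdisj).trans ?_)
    exact subsums_mono (union_subset (Icc_subset_Icc_right hMM') (Icc_subset_Icc_left (by omega)))
  · exact hmin.add (isLeast_progression hlh hr.le)
  · exact hmax.add (isGreatest_progression hlh hr.le)

theorem MMProperties.add_block {a : ℕ → ℝ} {S : Finset ℝ} {M n : ℕ} {δ lo hi r : ℝ}
    (hS : MMProperties a S M δ lo hi) (hn : 1 ≤ n)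
    (ha : ∀ i, 1 ≤ i → i ≤ n + 2 → a (M + i) = (mmB n i : ℝ) * r) (hr : 0 < r)
    (hδ : δ ≤ 3 * 2 ^ n * r) :
    MMProperties a (S + progression (2 ^ n) (2 ^ (n + 2) - 1) r) (M + (n + 2)) r
      (lo + 2 ^ n * r) (hi + (2 ^ (n + 2) - 1) * r) := by
  have hcast : ((2 ^ (n + 2) - 1 : ℕ) : ℝ) = 2 ^ (n + 2) - 1 := by
    rw [Nat.cast_pred (by positivity)]; push_cast; rfl
  have hlh : 2 ^ n ≤ 2 ^ (n + 2) - 1 := by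
    have : 2 ^ (n + 2) = 4 * 2 ^ n := by ring
    have : 0 < 2 ^ n := by positivity
    omega
  have h := hS.add_progression (Nat.le_add_right M _) (progression_subset_subsums_mmB hn ha) hlh hr
    (by rw [hcast, pow_add]; push_cast; linarith)
  rwa [hcast, Nat.cast_pow, Nat.cast_ofNat] at h

theorem mm_Dk_properties_general (n N : ℕ → ℕ) (q a : ℕ → ℝ)
    (hn : ∀ k, 1 ≤ k → 1 ≤ n k)
    (hN : ∀ k, N (k + 1) = N k + (n (k + 1) + 2))
    (hq1 : q 1 = 1) (hq : ∀ k, 1 ≤ k → q (k + 1) = q k / (3 * 2 ^ n (k + 1)))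
    (ha : ∀ k i, 1 ≤ i → i ≤ n (k + 1) + 2 →
      a (N k + i) = (mmB (n (k + 1)) i : ℝ) * q (k + 1))
    (C D : ℕ → Finset ℝ)
    (hC : ∀ k, 1 ≤ k →
      C k = ((Finset.Icc (2 ^ n k) (2 ^ (n k + 2) - 1) : Finset ℕ)).image (fun p : ℕ => (p : ℝ) * q k))
    (hD1 : D 1 = C 1) (hD : ∀ k, 1 ≤ k → D (k + 1) = D k + C (k + 1)) :
    ∀ k, 1 ≤ k →
      (∀ x ∈ D k, ∃ A ⊆ Finset.Icc 1 (N k), x = ∑ i ∈ A, a i) ∧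
      (∀ x ∈ D k, (∃ y ∈ D k, x < y) → ∃ y ∈ D k, x < y ∧ y ≤ x + q k) ∧
      ((∑ i ∈ Finset.Icc 1 k, (2 : ℝ) ^ n i * q i) ∈ D k ∧
        ∀ x ∈ D k, (∑ i ∈ Finset.Icc 1 k, (2 : ℝ) ^ n i * q i) ≤ x) ∧
      ((∑ i ∈ Finset.Icc 1 k, ((2 : ℝ) ^ (n i + 2) - 1) * q i) ∈ D k ∧
        ∀ x ∈ D k, x ≤ ∑ i ∈ Finset.Icc 1 k, ((2 : ℝ) ^ (n i + 2) - 1) * q i) := by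
  have hq_pos : ∀ k, 1 ≤ k → 0 < q k := by
    intro k hk
    induction k, hk using Nat.le_induction with
    | base => rw [hq1]; exact one_pos
    | succ k hk ih => rw [hq k hk]; positivity
  have hC' : ∀ k, 1 ≤ k → C k = progression (2 ^ n k) (2 ^ (n k + 2) - 1) (q k) := hC
  intro k hk
  induction k, hk using Nat.le_induction with
  | base =>
    -- `D 1 = {0} + C 1`: the base case is the inductive step from `D 0 = {0}`
    have h := (mmProperties_zero a (N 0)).add_block (hn 1 le_rfl) (ha 0) (hq_pos 1 le_rfl)
      (by have := hq_pos 1 le_rfl; positivity)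
    rw [hD1, hC' 1 le_rfl, hN 0]
    simp only [zero_add, Icc_self, sum_singleton] at h ⊢
    exact h
  | succ k hk ih =>
    rw [hD k hk, hC' (k + 1) (by omega), hN k, sum_Icc_succ_top (by omega),
      sum_Icc_succ_top (by omega)]
    exact MMProperties.add_block ih (hn _ (by omega)) (ha k) (hq_pos _ (by omega))
      (by rw [hq k hk, mul_div_cancel₀ _ (by positivity)])

/-- Properties (α), (β), (γ) of the sets `D k = C 1 + ⋯ + C k` in the
Marchwicki–Miska construction. -/
theorem mm_Dk_properties (n N : ℕ → ℕ) (q a : ℕ → ℝ)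
    (hn : ∀ k, 1 ≤ k → 1 ≤ n k)
    (hN0 : N 0 = 0) (hN : ∀ k, N (k + 1) = N k + (n (k + 1) + 2))
    (hq1 : q 1 = 1) (hq : ∀ k, 1 ≤ k → q (k + 1) = q k / (3 * 2 ^ n (k + 1)))
    (ha : ∀ k i, 1 ≤ i → i ≤ n (k + 1) + 2 →
      a (N k + i) = (mmB (n (k + 1)) i : ℝ) * q (k + 1))
    (C D : ℕ → Finset ℝ)
    (hC : ∀ k, 1 ≤ k →
      C k = ((Finset.Icc (2 ^ n k) (2 ^ (n k + 2) - 1) : Finset ℕ)).image (fun p : ℕ => (p : ℝ) * q k))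
    (hD1 : D 1 = C 1) (hD : ∀ k, 1 ≤ k → D (k + 1) = D k + C (k + 1)) :
    ∀ k, 1 ≤ k →
      (∀ x ∈ D k, ∃ A ⊆ Finset.Icc 1 (N k), x = ∑ i ∈ A, a i) ∧
      (∀ x ∈ D k, (∃ y ∈ D k, x < y) → ∃ y ∈ D k, x < y ∧ y ≤ x + q k) ∧
      ((∑ i ∈ Finset.Icc 1 k, (2 : ℝ) ^ n i * q i) ∈ D k ∧
        ∀ x ∈ D k, (∑ i ∈ Finset.Icc 1 k, (2 : ℝ) ^ n i * q i) ≤ x) ∧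
      ((∑ i ∈ Finset.Icc 1 k, ((2 : ℝ) ^ (n i + 2) - 1) * q i) ∈ D k ∧
        ∀ x ∈ D k, x ≤ ∑ i ∈ Finset.Icc 1 k, ((2 : ℝ) ^ (n i + 2) - 1) * q i) :=
  mm_Dk_properties_general n N q a hn hN hq1 hq ha C D hC hD1 hD
end
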